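/- For n ∈ ℕ and s ∈ ℂ with Re(s) > 1, define f_{n,s}(z) := e(−n Re(z))·(n Im(z))^{1/2}·I_{s−1/2}(2πn Im(z)). Then applying the normalized weight-0 Hecke operator T(n) gives f_{1,s} | T(n) = f_{n,s}. -/

import Mathlib

open Complex Real Filter Topology Asymptotics

noncomputable section

abbrev SL2Z := Matrix.SpecialLinearGroup (Fin 2) ℤ

/-- The congruence subgroup `Γ₀(N)`. -/
def Γ₀ (N : ℕ) : Subgroup SL2Z := CongruenceSubgroup.Gamma0 N

/-- The `(i,j)` entry of `M`, as a complex number. -/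
def mval (M : SL2Z) (i j : Fin 2) : ℂ := ((M : Matrix (Fin 2) (Fin 2) ℤ) i j : ℂ)

/-- The Möbius action `Mτ = (aτ+b)/(cτ+d)`. -/
def moeb (M : SL2Z) (τ : ℂ) : ℂ :=
  (mval M 0 0 * τ + mval M 0 1) / (mval M 1 0 * τ + mval M 1 1)

/-- The automorphy factor `j(M,τ) = cτ + d`. -/
def jfac (M : SL2Z) (τ : ℂ) : ℂ := mval M 1 0 * τ + mval M 1 1

/-- `φ_s(τ,z) = Im(z)^{1+s} (τ-z)⁻¹ (τ-z̄)⁻¹ |τ-z̄|^{-2s}`. -/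
def phiS (s τ z : ℂ) : ℂ :=
  (z.im : ℂ) ^ (1 + s) * (τ - z)⁻¹ * (τ - (starRingEnd ℂ) z)⁻¹ *
    ((‖τ - (starRingEnd ℂ) z‖ : ℂ)) ^ (-2 * s)

/-- The Poincaré series `P_{N,s}(τ,z)`. -/
def Pser (N : ℕ) (s τ z : ℂ) : ℂ :=
  ∑' M : Γ₀ N, phiS s (moeb M τ) z /
    ((jfac M τ) ^ 2 * ((‖jfac M τ‖ : ℂ)) ^ (2 * s))

/-- `Ψ` is the analytic continuation of `s ↦ P_{N,s}(τ,z)` to `s = 0`, i.e.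
`Im(z)·Ψ_{2,N}(τ,z)` is the value at `s = 0` of an analytic function agreeing with
`P_{N,s}(τ,z)` for `Re(s) > 0` near `0`. -/
def IsPsiCont (N : ℕ) (Ψ : ℂ → ℂ → ℂ) : Prop :=
  ∀ τ z : ℂ, 0 < τ.im → 0 < z.im →
    ∃ g : ℂ → ℂ, AnalyticAt ℂ g 0 ∧
      (∀ᶠ s in 𝓝[{s : ℂ | 0 < s.re}] (0 : ℂ), g s = Pser N s τ z) ∧
      g 0 = (z.im : ℂ) * Ψ τ z

/-- `H*_{N,z}(τ) := -(Im z/(2π)) Ψ_{2,N}(τ,z)`. -/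
def Hstar (N : ℕ) (Ψ : ℂ → ℂ → ℂ) (z τ : ℂ) : ℂ :=
  -((z.im : ℂ) / (2 * (π : ℂ))) * Ψ τ z

/-- The modified Bessel function of the first kind `I_ν`. -/
def besselI (ν x : ℂ) : ℂ :=
  ∑' k : ℕ, (x / 2) ^ (2 * k) * (x / 2) ^ ν / ((Nat.factorial k) * Complex.Gamma (k + ν + 1))

/-- The Bessel function of the first kind `J_ν`. -/
def besselJ (ν x : ℂ) : ℂ :=
  ∑' k : ℕ, (-1) ^ k * (x / 2) ^ (2 * k) * (x / 2) ^ ν /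
    ((Nat.factorial k) * Complex.Gamma (k + ν + 1))

/-- The translation matrix `T = (1 1; 0 1)`. -/
def TMat : SL2Z := ⟨!![1, 1; 0, 1], by simp [Matrix.det_fin_two_of]⟩

/-- `-I ∈ SL₂(ℤ)`. -/
def negI : SL2Z := ⟨!![-1, 0; 0, -1], by simp [Matrix.det_fin_two_of]⟩

/-- `Γ_∞ = {± (1 m; 0 1)}`, the subgroup generated by `T` and `-I`. -/
def GammaInf : Subgroup SL2Z := Subgroup.closure {TMat, negI}

/-- A canonical set of representatives for `Γ_∞\Γ₀(N)`: bottom row `(c,d)` with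
`c > 0` and `0 ≤ a < c`, together with the identity (representing the row `(0,±1)`). -/
def nieburRep (N : ℕ) : Set SL2Z :=
  {M | M ∈ Γ₀ N ∧
    ((0 < (M : Matrix (Fin 2) (Fin 2) ℤ) 1 0 ∧
      0 ≤ (M : Matrix (Fin 2) (Fin 2) ℤ) 0 0 ∧
      (M : Matrix (Fin 2) (Fin 2) ℤ) 0 0 < (M : Matrix (Fin 2) (Fin 2) ℤ) 1 0) ∨ M = 1)}

/-- The summand `e(-n Re(Mz)) Im(Mz)^{1/2} I_{s-1/2}(2πn Im(Mz))` of Niebur's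
Poincaré series, written using `Re w = (w + w̄)/2`. -/
def nieburSummand (n : ℕ) (s z : ℂ) (M : SL2Z) : ℂ :=
  Complex.exp (-(π : ℂ) * Complex.I * n * (moeb M z + (starRingEnd ℂ) (moeb M z))) *
    (((moeb M z).im : ℂ)) ^ (1/2 : ℂ) *
    besselI (s - 1/2) (2 * (π : ℂ) * n * ((moeb M z).im : ℂ))

/-- Niebur's Poincaré series `F_{N,-n,s}(z)`, summed over `Γ_∞\Γ₀(N)`. -/
def Fser (N n : ℕ) (s z : ℂ) : ℂ := ∑' M : nieburRep N, nieburSummand n s z M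

/-- `F` is, for each level `N ≥ 1` and each `n ≥ 1`, the analytic continuation
`F_{N,-n}` of `s ↦ F_{N,-n,s}(z)` to `s = 1`. -/
def IsNieburCont (F : ℕ → ℕ → ℂ → ℂ) : Prop :=
  ∀ N n : ℕ, 0 < N → 0 < n → ∀ z : ℂ, 0 < z.im →
    ∃ g : ℂ → ℂ, AnalyticAt ℂ g 1 ∧
      (∀ᶠ s in 𝓝[{s : ℂ | 1 < s.re}] (1 : ℂ), g s = Fser N n s z) ∧
      g 1 = F N n z

/-- `j_{N,n}(z) := 2π√n · F_{N,-n}(z)`. -/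
def jN (F : ℕ → ℕ → ℂ → ℂ) (N n : ℕ) (z : ℂ) : ℂ :=
  2 * (π : ℂ) * (Real.sqrt n : ℂ) * F N n z

/-- The normalized weight-0 Hecke operator
`(f | T(n))(z) = Σ_{ad = n} Σ_{b mod d} f((az+b)/d)`. -/
def heckeT (n : ℕ) (f : ℂ → ℂ) (z : ℂ) : ℂ :=
  ∑ a ∈ n.divisors, ∑ b ∈ Finset.range (n / a), f (((a : ℂ) ^ 2 * z + a * b) / n)

/-- The weight-`k` hyperbolic Laplacian
`Δ_k = -y²(∂²/∂x² + ∂²/∂y²) + iky(∂/∂x + i ∂/∂y)`. -/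
def wtLaplacian (k : ℤ) (f : ℂ → ℂ) (τ : ℂ) : ℂ :=
  -(τ.im : ℂ) ^ 2 *
      ((fderiv ℝ (fun w => (fderiv ℝ f w) 1) τ) 1 +
        (fderiv ℝ (fun w => (fderiv ℝ f w) Complex.I) τ) Complex.I) +
    Complex.I * (k : ℂ) * (τ.im : ℂ) *
      ((fderiv ℝ f τ) 1 + Complex.I * ((fderiv ℝ f τ) Complex.I))

/-- The classical Kloosterman sum `K(m,n;c) = Σ_{ad ≡ 1 (c)} e((md+na)/c)`. -/
def Kl (m n : ℤ) (c : ℕ) : ℂ :=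
  ∑' d : (ZMod c)ˣ,
    Complex.exp (2 * (π : ℂ) * Complex.I *
      (m * ((((d : ZMod c)).val : ℤ) : ℂ) + n * ((((d⁻¹ : (ZMod c)ˣ) : ZMod c)).val : ℂ)) / c)

/-- `ℓ` is the width of the cusp `M_ρ ∞` of `Γ₀(N)`. -/
def IsWidth (N : ℕ) (Mρ : SL2Z) (ℓ : ℕ) : Prop :=
  0 < ℓ ∧ Mρ * TMat ^ ℓ * Mρ⁻¹ ∈ Γ₀ N ∧
    ∀ k : ℕ, 0 < k → Mρ * TMat ^ k * Mρ⁻¹ ∈ Γ₀ N → ℓ ≤ k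

open Classical in
/-- The generalized Kloosterman sum `K_{𝔞,𝔟}(m,n;c)` attached to cusps with scaling
matrices `Ma, Mb` and widths `la, lb`: each double coset in
`Γ_∞^{l_𝔞}\M_𝔞⁻¹Γ₀(N)M_𝔟/Γ_∞^{l_𝔟}` with lower-left entry `c` is uniquely determined
by `(a mod la·c, d mod lb·c)`, and contributes `e(md/(lb·c) + na/(la·c))`. -/
def genKloos (N : ℕ) (Ma Mb : SL2Z) (la lb : ℕ) (m n : ℤ) (c : ℤ) : ℂ :=
  ∑' p : ZMod (la * c.natAbs) × ZMod (lb * c.natAbs),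
    if ∃ A : SL2Z, (∃ γ ∈ Γ₀ N, A = Ma⁻¹ * γ * Mb) ∧
        (A : Matrix (Fin 2) (Fin 2) ℤ) 1 0 = c ∧
        (((A : Matrix (Fin 2) (Fin 2) ℤ) 0 0 : ZMod (la * c.natAbs)) = p.1) ∧
        (((A : Matrix (Fin 2) (Fin 2) ℤ) 1 1 : ZMod (lb * c.natAbs)) = p.2)
    then Complex.exp (2 * (π : ℂ) * Complex.I *
        ((m * (p.2.val : ℂ)) / ((lb : ℂ) * c) + (n * (p.1.val : ℂ)) / ((la : ℂ) * c)))
    else 0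

/-- Two scaling matrices define `Γ₀(N)`-equivalent cusps. -/
def CuspEquiv (N : ℕ) (M₁ M₂ : SL2Z) : Prop :=
  ∃ γ ∈ Γ₀ N, M₂⁻¹ * γ * M₁ ∈ GammaInf

/-- Canonical representatives of the bottom rows `(c,d)` of `M_ρ M`, `M ∈ Γ₀(N)`,
up to sign; these index the cosets `Γ_ρ\Γ₀(N)`. -/
def eisRow (N : ℕ) (Mρ : SL2Z) : Set (ℤ × ℤ) :=
  {p | (0 < p.1 ∨ (p.1 = 0 ∧ 0 < p.2)) ∧
    ∃ M ∈ Γ₀ N, ((Mρ * M : SL2Z) : Matrix (Fin 2) (Fin 2) ℤ) 1 0 = p.1 ∧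
      ((Mρ * M : SL2Z) : Matrix (Fin 2) (Fin 2) ℤ) 1 1 = p.2}

/-- The weight-2 Eisenstein series `E*_{2,N,ρ,s}(τ) = Σ_{M ∈ Γ_ρ\Γ₀(N)}
j(M_ρM,τ)^{-2}|j(M_ρM,τ)|^{-2s}`. -/
def E2ser (N : ℕ) (Mρ : SL2Z) (s τ : ℂ) : ℂ :=
  ∑' p : eisRow N Mρ,
    (((p : ℤ × ℤ).1 : ℂ) * τ + ((p : ℤ × ℤ).2 : ℂ)) ^ (-2 : ℤ) *
      ((‖((p : ℤ × ℤ).1 : ℂ) * τ + ((p : ℤ × ℤ).2 : ℂ)‖ : ℂ)) ^ (-2 * s)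

/-- `E` is the analytic continuation `E*_{2,N,ρ}` of `s ↦ E*_{2,N,ρ,s}(τ)` to `s = 0`. -/
def IsE2Cont (N : ℕ) (Mρ : SL2Z) (E : ℂ → ℂ) : Prop :=
  ∀ τ : ℂ, 0 < τ.im →
    ∃ g : ℂ → ℂ, AnalyticAt ℂ g 0 ∧
      (∀ᶠ s in 𝓝[{s : ℂ | 0 < s.re}] (0 : ℂ), g s = E2ser N Mρ s τ) ∧
      g 0 = E τ

/-- `f` is a meromorphic modular form of weight `k` on `Γ₀(N)` (meromorphy at the
cusps is imposed separately where needed). -/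
def IsMeroModular (N : ℕ) (k : ℤ) (f : ℂ → ℂ) : Prop :=
  (∀ τ : ℂ, 0 < τ.im → MeromorphicAt f τ) ∧
    ∀ γ ∈ Γ₀ N, ∀ τ : ℂ, 0 < τ.im → f (moeb γ τ) = (jfac γ τ) ^ k * f τ

open Classical in
/-- The order of vanishing of `f` at a point (0 if `f` is not meromorphic there). -/
def mOrd (f : ℂ → ℂ) (z : ℂ) : ℤ :=
  if h : MeromorphicAt f z then ((meromorphicOrderAt f z).untopD 0) else 0

/-- `f` is a holomorphic cusp form of weight 2 on `Γ₀(N)`. -/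
def IsCuspForm2 (N : ℕ) (g : ℂ → ℂ) : Prop :=
  (∀ τ : ℂ, 0 < τ.im → DifferentiableAt ℂ g τ) ∧
    (∀ γ ∈ Γ₀ N, ∀ τ : ℂ, 0 < τ.im → g (moeb γ τ) = (jfac γ τ) ^ 2 * g τ) ∧
    ∀ A : SL2Z, ∀ x : ℝ,
      Tendsto (fun y : ℝ => ((jfac A (x + y * Complex.I)) ^ 2)⁻¹ *
        g (moeb A (x + y * Complex.I))) atTop (𝓝 0)

/-- `f_{n,s}(z) = e(-n Re z)(n Im z)^{1/2} I_{s-1/2}(2πn Im z)`. -/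
def fns (n : ℕ) (s : ℂ) (z : ℂ) : ℂ :=
  Complex.exp (-2 * (π : ℂ) * Complex.I * (n : ℂ) * (z.re : ℂ)) *
    ((((n : ℝ) * z.im : ℝ)) : ℂ) ^ ((1 : ℂ) / 2) *
    besselI (s - 1 / 2) (2 * (π : ℂ) * (n : ℂ) * (z.im : ℂ))

lemma sum_exp_eq_zero (d : ℕ) (hd : 1 < d) :
    ∑ b ∈ Finset.range d, Complex.exp (-2*(π:ℂ)*Complex.I*(b:ℂ)/d) = 0 := by
  have h1 : ∀ b : ℕ, Complex.exp (-2*(π:ℂ)*Complex.I*(b:ℂ)/d) =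
      (Complex.exp (-2*(π:ℂ)*Complex.I/d))^b := by
    intro b
    rw [← Complex.exp_nat_mul]
    congr 1
    ring
  simp_rw [h1]
  have hd0 : (d:ℂ) ≠ 0 := Nat.cast_ne_zero.2 (by omega)
  have hπ : (π:ℂ) ≠ 0 := Complex.ofReal_ne_zero.2 Real.pi_ne_zero
  have h2 : (2:ℂ) * π * Complex.I ≠ 0 := by
    simp [Complex.I_ne_zero, hπ]
  have hx : Complex.exp (-2*(π:ℂ)*Complex.I/d) ≠ 1 := by
    intro h
    rw [Complex.exp_eq_one_iff] at h
    obtain ⟨k, hk⟩ := h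
    have hki : ((k * d : ℤ) : ℂ) = ((-1 : ℤ) : ℂ) := by
      push_cast
      apply mul_right_cancel₀ h2
      field_simp at hk ⊢
      linear_combination -hk
    have : (k : ℤ) * d = -1 := Int.cast_injective hki
    have hdvd : (d:ℤ) ∣ 1 := ⟨-k, by linarith⟩
    have := Int.le_of_dvd one_pos hdvd
    omega
  rw [geom_sum_eq hx]
  have hpow : (Complex.exp (-2*(π:ℂ)*Complex.I/d))^d = 1 := by
    rw [← Complex.exp_nat_mul]
    rw [show (d:ℂ)*(-2*(π:ℂ)*Complex.I/d) = (-1 : ℤ)*(2*(π:ℝ)*Complex.I) by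
      push_cast; field_simp]
    exact Complex.exp_int_mul_two_pi_mul_I (-1)
  rw [hpow]
  simp

/-- For `Re(s) > 1`, applying the normalized weight-0 Hecke operator
gives `f_{1,s} | T(n) = f_{n,s}`. -/
theorem statement16 (n : ℕ) (hn : 0 < n) (s : ℂ) (hs : 1 < s.re)
    (z : ℂ) (hz : 0 < z.im) :
    heckeT n (fns 1 s) z = fns n s z := by
  have hn0 : (n:ℂ) ≠ 0 := Nat.cast_ne_zero.2 hn.ne'
  unfold heckeT
  rw [Finset.sum_eq_single n]
  · rw [Nat.div_self hn]
    simp only [Finset.sum_range_one, Nat.cast_zero, mul_zero, add_zero]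
    have hw : ((n:ℂ)^2*z)/(n:ℂ) = (n:ℂ)*z := by field_simp
    rw [hw]
    unfold fns
    have hre : ((n:ℂ)*z).re = (n:ℝ)*z.re := by simp [Complex.mul_re]
    have him : ((n:ℂ)*z).im = (n:ℝ)*z.im := by simp [Complex.mul_im]
    rw [hre, him]
    push_cast
    ring_nf
  · intro a ha hane
    obtain ⟨hdvd, _⟩ := Nat.mem_divisors.1 ha
    have ha0 : 0 < a := Nat.pos_of_dvd_of_pos hdvd hn
    set d := n / a with hd
    have hnd : n = a * d := (Nat.mul_div_cancel' hdvd).symm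
    have hd1 : 1 < d := by
      rcases Nat.lt_or_ge d 2 with h | h
      · interval_cases d <;> omega
      · omega
    have ha0c : (a:ℂ) ≠ 0 := Nat.cast_ne_zero.2 ha0.ne'
    have hd0c : (d:ℂ) ≠ 0 := Nat.cast_ne_zero.2 (by omega)
    -- rewrite each summand as C * exp(-2πi b/d)
    have key : ∀ b ∈ Finset.range d,
        fns 1 s (((a:ℂ)^2*z + a*b)/n) =
        (Complex.exp (-2 * (π:ℂ) * Complex.I * (((a:ℝ)^2*z.re/n : ℝ):ℂ)) *
          ((((a:ℝ)^2*z.im/n : ℝ)):ℂ) ^ ((1:ℂ)/2) *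
          besselI (s - 1/2) (2*(π:ℂ)*(((a:ℝ)^2*z.im/n : ℝ):ℂ))) *
        Complex.exp (-2*(π:ℂ)*Complex.I*(b:ℂ)/d) := by
      intro b _
      have hw : ((a:ℂ)^2*z + a*b)/(n:ℂ) =
          (((a:ℝ)^2/n : ℝ):ℂ)*z + (((a*b:ℝ)/n : ℝ):ℂ) := by
        push_cast
        field_simp
      rw [hw]
      unfold fns
      have hre : ((((a:ℝ)^2/n : ℝ):ℂ)*z + (((a*b:ℝ)/n : ℝ):ℂ)).re
          = (a:ℝ)^2/n*z.re + (a*b:ℝ)/n := by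
        simp only [Complex.add_re, Complex.re_ofReal_mul, Complex.ofReal_re]
      have him : ((((a:ℝ)^2/n : ℝ):ℂ)*z + (((a*b:ℝ)/n : ℝ):ℂ)).im
          = (a:ℝ)^2/n*z.im := by
        simp only [Complex.add_im, Complex.im_ofReal_mul, Complex.ofReal_im, add_zero]
      rw [hre, him]
      have hbd : ((a:ℂ)*b)/n = (b:ℂ)/d := by
        rw [show (n:ℂ) = (a:ℂ)*(d:ℂ) by push_cast [hnd]; ring]
        field_simp
      rw [show (-2 * (π:ℂ) * Complex.I * (1:ℕ) * (((a:ℝ)^2/n*z.re + (a*b:ℝ)/n : ℝ):ℂ))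
          = -2 * (π:ℂ) * Complex.I * (((a:ℝ)^2*z.re/n : ℝ):ℂ) + (-2*(π:ℂ)*Complex.I*((a:ℂ)*b/n)) by
        push_cast; ring]
      rw [hbd, Complex.exp_add]
      push_cast
      ring_nf
    rw [Finset.sum_congr rfl key, ← Finset.mul_sum, sum_exp_eq_zero d hd1, mul_zero]
  · intro h
    exact absurd (Nat.mem_divisors_self n hn.ne') h
end
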